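/- arXiv:2311.18003 — 4 statements merged into one kernel-verified Lean document; each statement's English description precedes it below -/
import Mathlib

section
/- Let H be a subspace of G × G. Then there exist nonnegative integers k and r such that dim(H ∩ H^ω) = n − k − r, dim H = n − k + r, and dim(H + H^ω) = n + k + r; equivalently, the codimension of H in H + H^ω equals 2k, the codimension of H ∩ H^ω in H equals 2r, and dim(H ∩ H^ω) = n − k − r. -/
/-!
The restriction of `ω` to `H` is alternating with radical `H ∩ H^ω`, and an alternating form has
even rank (split off a hyperbolic plane and induct), so `dim H - dim (H ∩ H^ω) = 2r`. Since `ω` is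
nondegenerate on the `2n`-dimensional space `G × G`, `dim H + dim H^ω = 2n`; together with
`dim (H + H^ω) + dim (H ∩ H^ω) = dim H + dim H^ω` this gives `dim (H + H^ω) - dim H = 2k` for
`k = n - dim (H ∩ H^ω) - r`.
-/

open Finset

/-- Orthogonal complement of a submodule with respect to a bilinear form:
`ortho ξ H = {v | ξ(v,h) = 0 for all h ∈ H}`. -/
def ortho {K V : Type*} [CommSemiring K] [AddCommMonoid V] [Module K V]
    (ξ : V →ₗ[K] V →ₗ[K] K) (H : Submodule K V) : Submodule K V :=
  ⨅ h ∈ H, LinearMap.ker (ξ.flip h)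

/-- The dot product `θ(a,b) = ∑ j, a j * b j` as a bilinear form on `Fin n → ZMod p`. -/
def dotB (p n : ℕ) : (Fin n → ZMod p) →ₗ[ZMod p] (Fin n → ZMod p) →ₗ[ZMod p] ZMod p :=
  LinearMap.mk₂ (ZMod p) (fun a b => ∑ j, a j * b j)
    (fun a a' b => by simp [add_mul, Finset.sum_add_distrib])
    (fun c a b => by simp [Finset.mul_sum, mul_assoc])
    (fun a b b' => by simp [mul_add, Finset.sum_add_distrib])
    (fun c a b => by simp [Finset.mul_sum, mul_left_comm])

/-- The symmetric form on `V × V` induced by a bilinear form `B` on `V`: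
`(v,w) ↦ B v.1 w.1 + B v.2 w.2`. -/
def sumB {K V : Type*} [CommRing K] [AddCommGroup V] [Module K V]
    (B : V →ₗ[K] V →ₗ[K] K) : (V × V) →ₗ[K] (V × V) →ₗ[K] K :=
  LinearMap.mk₂ K (fun v w => B v.1 w.1 + B v.2 w.2)
    (fun v v' w => by simp; ring)
    (fun c v w => by simp; ring)
    (fun v w w' => by simp; ring)
    (fun c v w => by simp; ring)

/-- The symplectic form on `V × V` induced by a symmetric bilinear form `B` on `V`:
`(v,w) ↦ B v.2 w.1 - B v.1 w.2`. -/
def sympB {K V : Type*} [CommRing K] [AddCommGroup V] [Module K V]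
    (B : V →ₗ[K] V →ₗ[K] K) : (V × V) →ₗ[K] (V × V) →ₗ[K] K :=
  LinearMap.mk₂ K (fun v w => B v.2 w.1 - B v.1 w.2)
    (fun v v' w => by simp; ring)
    (fun c v w => by simp; ring)
    (fun v w w' => by simp; ring)
    (fun c v w => by simp; ring)

open Module Submodule

namespace LinearMap.BilinForm

variable {K V : Type*} [Field K] [AddCommGroup V] [Module K V] {B : LinearMap.BilinForm K V}

lemma IsAlt.eq_zero_of_apply_combination_eq_zero (hB : B.IsAlt) {v w : V} (hvw : B v w ≠ 0)
    {s t : K} (hv : B v (s • v + t • w) = 0) (hw : B w (s • v + t • w) = 0) :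
    s = 0 ∧ t = 0 := by
  simp only [map_add, map_smul, smul_eq_mul, hB.self_eq_zero, mul_zero, zero_add, add_zero]
    at hv hw
  rw [← hB.neg_eq v w, mul_neg, neg_eq_zero] at hw
  exact ⟨(mul_eq_zero.mp hw).resolve_right hvw, (mul_eq_zero.mp hv).resolve_right hvw⟩

lemma IsAlt.linearIndependent_pair (hB : B.IsAlt) {v w : V} (hvw : B v w ≠ 0) :
    LinearIndependent K ![v, w] :=
  LinearIndependent.pair_iff.mpr fun s t h =>
    hB.eq_zero_of_apply_combination_eq_zero hvw (by simp [h]) (by simp [h])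

lemma IsAlt.nondegenerate_restrict_span_pair (hB : B.IsAlt) {v w : V} (hvw : B v w ≠ 0) :
    (B.restrict (span K (Set.range ![v, w]))).Nondegenerate := by
  refine B.nondegenerate_restrict_of_disjoint_orthogonal hB.isRefl (disjoint_def.mpr ?_)
  intro x hxU hxO
  obtain ⟨c, rfl⟩ := (mem_span_range_iff_exists_fun K).mp hxU
  rw [Fin.sum_univ_two] at hxO ⊢
  obtain ⟨hs, ht⟩ := hB.eq_zero_of_apply_combination_eq_zero hvw
    (hxO v (subset_span ⟨0, rfl⟩)) (hxO w (subset_span ⟨1, rfl⟩))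
  simp [hs, ht]

theorem IsAlt.even_finrank_of_nondegenerate [FiniteDimensional K V] (hB : B.IsAlt)
    (hBn : B.Nondegenerate) : Even (finrank K V) := by
  induction h : finrank K V using Nat.strong_induction_on generalizing V with
  | _ d ih =>
  rcases Nat.eq_zero_or_pos d with rfl | hd
  · exact ⟨0, rfl⟩
  have : Nontrivial V := nontrivial_of_finrank_pos (R := K) (h ▸ hd)
  obtain ⟨v, hv⟩ := exists_ne (0 : V)
  obtain ⟨w, hvw⟩ : ∃ w, B v w ≠ 0 := by
    by_contra! hzero
    exact hv (hBn.1 v hzero)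
  set U := span K (Set.range ![v, w])
  have hU : finrank K U = 2 := by
    rw [finrank_span_eq_card (hB.linearIndependent_pair hvw), Fintype.card_fin]
  have hcompl : IsCompl U (B.orthogonal U) :=
    isCompl_orthogonal_of_restrict_nondegenerate hB.isRefl
      (hB.nondegenerate_restrict_span_pair hvw)
  have hW : (B.restrict (B.orthogonal U)).Nondegenerate := by
    rw [restrict_nondegenerate_iff_isCompl_orthogonal hB.isRefl,
      orthogonal_orthogonal hBn hB.isRefl]
    exact hcompl.symm
  have hsum := finrank_add_eq_of_isCompl hcompl
  obtain ⟨r, hr⟩ := ih _ (by omega) (B := B.restrict _) (fun x => hB x) hW rfl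
  exact ⟨r + 1, by omega⟩

theorem IsAlt.exists_finrank_eq_finrank_ker_add_two_mul [FiniteDimensional K V]
    (hB : B.IsAlt) : ∃ r, finrank K V = finrank K (LinearMap.ker B) + 2 * r := by
  obtain ⟨W, hW⟩ := (LinearMap.ker B).exists_isCompl
  have hWn : (B.restrict W).Nondegenerate := by
    rw [nondegenerate_iff_ker_eq_bot,
      ker_restrict_eq_of_codisjoint hW.symm.codisjoint fun x _ y hy => ?_]
    · exact disjoint_iff_comap_eq_bot.mp hW.symm.disjoint
    · exact hB.isRefl _ _ (by simp [LinearMap.mem_ker.mp hy])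
  obtain ⟨r, hr⟩ := IsAlt.even_finrank_of_nondegenerate (B := B.restrict W)
    (fun x => hB x) hWn
  exact ⟨r, by rw [← finrank_add_eq_of_isCompl hW, hr, two_mul]⟩

lemma map_ker_restrict_eq_inf_orthogonal (hB : B.IsRefl) (W : Submodule K V) :
    (LinearMap.ker (B.restrict W)).map W.subtype = W ⊓ B.orthogonal W := by
  refine le_antisymm ?_ (inf_orthogonal_self_le_ker_restrict hB)
  rintro _ ⟨⟨x, hx⟩, hker, rfl⟩
  exact ⟨hx, fun w hw => hB _ _ (LinearMap.congr_fun hker ⟨w, hw⟩)⟩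

theorem IsAlt.exists_finrank_inf_sup_orthogonal [FiniteDimensional K V] (hB : B.IsAlt)
    (hBn : B.Nondegenerate) {n : ℕ} (hV : finrank K V = 2 * n) (H : Submodule K V) :
    ∃ k r : ℕ,
      finrank K ↥(H ⊓ B.orthogonal H) + k + r = n ∧
      finrank K ↥H + k = n + r ∧
      finrank K ↥(H ⊔ B.orthogonal H) = n + k + r ∧
      finrank K ↥(H ⊔ B.orthogonal H) = finrank K ↥H + 2 * k ∧
      finrank K ↥H = finrank K ↥(H ⊓ B.orthogonal H) + 2 * r := by
  obtain ⟨r, hr⟩ := IsAlt.exists_finrank_eq_finrank_ker_add_two_mul (B := B.restrict H)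
    (fun x => hB x)
  have hrad := finrank_map_subtype_eq H (LinearMap.ker (B.restrict H))
  rw [map_ker_restrict_eq_inf_orthogonal hB.isRefl] at hrad
  have hO := finrank_orthogonal hBn H
  have hH := H.finrank_le
  have hsup := finrank_sup_add_finrank_inf_eq H (B.orthogonal H)
  have hHsup := finrank_mono (le_sup_left : H ≤ H ⊔ B.orthogonal H)
  exact ⟨n - finrank K ↥(H ⊓ B.orthogonal H) - r, r, by omega, by omega, by omega, by omega,
    by omega⟩

end LinearMap.BilinForm

lemma ortho_eq_orthogonal {R M : Type*} [CommSemiring R] [AddCommMonoid M] [Module R M]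
    {B : LinearMap.BilinForm R M} (hB : B.IsRefl) (H : Submodule R M) :
    ortho B H = B.orthogonal H := by
  ext x
  simp only [ortho, mem_iInf, LinearMap.mem_ker, LinearMap.flip_apply,
    LinearMap.BilinForm.mem_orthogonal_iff]
  exact forall₂_congr fun h _ => ⟨hB x h, hB h x⟩

section SymplecticDouble

variable {K V : Type*} [CommRing K] [AddCommGroup V] [Module K V] {B : LinearMap.BilinForm K V}

lemma sympB_isAlt (hB : B.IsSymm) : LinearMap.BilinForm.IsAlt (sympB B) := fun v => by
  simp [sympB, hB.eq v.2 v.1]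

lemma sympB_nondegenerate (hB : B.IsSymm) (hBn : B.SeparatingLeft) :
    LinearMap.BilinForm.Nondegenerate (sympB B) := by
  refine (sympB_isAlt hB).isRefl.nondegenerate_iff_separatingLeft.mpr fun ⟨a, b⟩ hab => ?_
  have ha : a = 0 := hBn a fun d => by simpa [sympB] using hab (0, d)
  have hb : b = 0 := hBn b fun c => by simpa [sympB] using hab (c, 0)
  simp [ha, hb]

end SymplecticDouble

lemma dotB_apply (p n : ℕ) (a b : Fin n → ZMod p) : dotB p n a b = a ⬝ᵥ b := rfl

lemma dotB_isSymm (p n : ℕ) : LinearMap.BilinForm.IsSymm (dotB p n) :=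
  ⟨dotProduct_comm⟩

lemma dotB_separatingLeft (p n : ℕ) : (dotB p n).SeparatingLeft := fun a ha =>
  dotProduct_eq_zero a fun b => by rw [← dotB_apply, ha]

/-- the tower of a subsystem stabilizer code `H ≤ G × G` has dimensions
`dim(H ⊓ H^ω) = n - k - r`, `dim H = n - k + r`, `dim(H ⊔ H^ω) = n + k + r`;
equivalently the codimension of `H` in `H ⊔ H^ω` is `2k` and the codimension of
`H ⊓ H^ω` in `H` is `2r`. -/
theorem stmt0 (p n : ℕ) [Fact p.Prime]
    (H : Submodule (ZMod p) ((Fin n → ZMod p) × (Fin n → ZMod p))) :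
    ∃ k r : ℕ,
      Module.finrank (ZMod p) ↥(H ⊓ ortho (sympB (dotB p n)) H) + k + r = n ∧
      Module.finrank (ZMod p) ↥H + k = n + r ∧
      Module.finrank (ZMod p) ↥(H ⊔ ortho (sympB (dotB p n)) H) = n + k + r ∧
      Module.finrank (ZMod p) ↥(H ⊔ ortho (sympB (dotB p n)) H)
        = Module.finrank (ZMod p) ↥H + 2 * k ∧
      Module.finrank (ZMod p) ↥H
        = Module.finrank (ZMod p) ↥(H ⊓ ortho (sympB (dotB p n)) H) + 2 * r := by
  have hω := sympB_isAlt (dotB_isSymm p n)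
  have hdim : finrank (ZMod p) ((Fin n → ZMod p) × (Fin n → ZMod p)) = 2 * n := by
    simp [finrank_prod, two_mul]
  rw [ortho_eq_orthogonal hω.isRefl]
  exact hω.exists_finrank_inf_sup_orthogonal
    (sympB_nondegenerate (dotB_isSymm p n) (dotB_separatingLeft p n)) hdim H
end

section
/- Let V be a vector space over the field ZMod p, let l ≥ 1, and let (x_1,z_1), …, (x_l,z_l) ∈ V × V. Let H ≤ V × V be the span of {(x_j,z_j)}, and define π_X, π_Z : (Fin l → ZMod p) → V by π_X(c) = ∑_j c_j·x_j and π_Z(c) = ∑_j c_j·z_j. Then H is a direct product of two subspaces of V if and only if ker π_X + ker π_Z = (Fin l → ZMod p). -/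
open Finset

/-- The linear map `c ↦ ∑ j, c j • v j` determined by a tuple of vectors `v`. -/
def lcomb {K V : Type*} [CommRing K] [AddCommGroup V] [Module K V] {l : ℕ}
    (v : Fin l → V) : (Fin l → K) →ₗ[K] V where
  toFun c := ∑ j, c j • v j
  map_add' a b := by simp [add_smul, Finset.sum_add_distrib]
  map_smul' c a := by simp [mul_smul, Finset.smul_sum]

lemma lcomb_apply {K V : Type*} [CommRing K] [AddCommGroup V] [Module K V] {l : ℕ}
    (v : Fin l → V) (c : Fin l → K) : lcomb v c = ∑ j, c j • v j := rfl

lemma range_lcomb {K V : Type*} [CommRing K] [AddCommGroup V] [Module K V] {l : ℕ}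
    (v : Fin l → V) : LinearMap.range (lcomb v) = Submodule.span K (Set.range v) := by
  apply le_antisymm
  · rintro _ ⟨c, rfl⟩
    rw [lcomb_apply]
    exact Submodule.sum_mem _ fun j _ =>
      Submodule.smul_mem _ _ (Submodule.subset_span (Set.mem_range_self j))
  · rw [Submodule.span_le]
    rintro _ ⟨j, rfl⟩
    exact LinearMap.mem_range.mpr
      ⟨Pi.single j 1, by simp [lcomb_apply, Pi.single_apply, ite_smul]⟩

/-- `H = span {(x_j, z_j)}` is a direct product of two subspaces of `V`
iff `ker π_X + ker π_Z = (Fin l → ZMod p)`. -/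
theorem stmt12 (p l : ℕ) [Fact p.Prime] (hl : 1 ≤ l)
    {V : Type*} [AddCommGroup V] [Module (ZMod p) V]
    (x z : Fin l → V)
    (H : Submodule (ZMod p) (V × V))
    (hH : H = Submodule.span (ZMod p) (Set.range fun j => (x j, z j))) :
    (∃ A B : Submodule (ZMod p) V, H = A.prod B) ↔
      LinearMap.ker (lcomb (K := ZMod p) x) ⊔ LinearMap.ker (lcomb (K := ZMod p) z) = ⊤ := by
  set K := ZMod p
  set Φ : (Fin l → K) →ₗ[K] V × V := lcomb fun j => (x j, z j) with hΦ
  have hrange : H = LinearMap.range Φ := by rw [hH, range_lcomb]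
  have hΦ_apply : ∀ c, Φ c = (lcomb x c, lcomb z c) := by
    intro c
    simp [hΦ, lcomb_apply, Prod.smul_mk, Prod.ext_iff, Prod.fst_sum, Prod.snd_sum]
  constructor
  · rintro ⟨A, B, hAB⟩
    rw [eq_top_iff]
    intro c _
    have h1 : (lcomb x c, lcomb z c) ∈ H := by
      rw [hrange]; exact ⟨c, hΦ_apply c⟩
    rw [hAB, Submodule.mem_prod] at h1
    have h2 : ((lcomb x c, (0 : V)) : V × V) ∈ H := by
      rw [hAB]; exact ⟨h1.1, B.zero_mem⟩
    rw [hrange] at h2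
    obtain ⟨b, hb⟩ := h2
    rw [hΦ_apply, Prod.ext_iff] at hb
    obtain ⟨hb1, hb2⟩ := hb
    simp only at hb1 hb2
    refine Submodule.mem_sup.2 ⟨c - b, ?_, b, ?_, by ring⟩
    · simp [LinearMap.mem_ker, map_sub, hb1, sub_eq_zero]
    · simp [LinearMap.mem_ker, hb2]
  · intro htop
    refine ⟨LinearMap.range (lcomb x), LinearMap.range (lcomb z), le_antisymm ?_ ?_⟩
    · rw [hrange]
      rintro _ ⟨c, rfl⟩
      rw [hΦ_apply]
      exact ⟨⟨c, rfl⟩, ⟨c, rfl⟩⟩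
    · rintro ⟨a, b⟩ ⟨⟨c, hc⟩, ⟨d, hd⟩⟩
      have hc' : c ∈ LinearMap.ker (lcomb (K := K) x) ⊔ LinearMap.ker (lcomb (K := K) z) :=
        htop ▸ Submodule.mem_top
      have hd' : d ∈ LinearMap.ker (lcomb (K := K) x) ⊔ LinearMap.ker (lcomb (K := K) z) :=
        htop ▸ Submodule.mem_top
      obtain ⟨u, hu, w, hw, huw⟩ := Submodule.mem_sup.1 hc'
      obtain ⟨u', hu', w', hw', huw'⟩ := Submodule.mem_sup.1 hd'
      rw [LinearMap.mem_ker] at hu hw hu' hw'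
      simp only at hc hd
      have key : ((a, b) : V × V) = Φ w + Φ u' := by
        rw [hΦ_apply, hΦ_apply, Prod.mk_add_mk, Prod.ext_iff]
        constructor
        · simp only [hu', add_zero]
          rw [← hc, ← huw, map_add, hu, zero_add]
        · simp only [hw, zero_add]
          rw [← hd, ← huw', map_add, hw', add_zero]
      rw [hrange, key]
      exact Submodule.add_mem _ ⟨w, rfl⟩ ⟨u', rfl⟩
end

section
/- Let H_X ≤ G be a subspace, let σ₀ ⊆ Fin n be a set of indices such that the cosets {e_i + H_X | i ∈ σ₀} of the standard basis vectors e_i form a basis of the quotient G/H_X, and for a ∈ G let wt_{σ₀}(a + H_X) denote the number of nonzero coefficients of a + H_X in this basis. Then: (i) for every a ∈ G, min{wt(a + h) | h ∈ H_X} ≤ wt_{σ₀}(a + H_X); and (ii) for every subspace H_Z ≤ G with H_X ≠ H_X + H_Z^θ, the minimum Hamming weight over (H_X + H_Z^θ) \ H_X is at most the minimum of wt_{σ₀} over the nonzero cosets in (H_X + H_Z^θ)/H_X. -/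
open Finset

/-- Hamming weight of a vector in `Fin n → ZMod p`. -/
def hwt {p n : ℕ} (a : Fin n → ZMod p) : ℕ :=
  (Finset.univ.filter fun j => a j ≠ 0).card

lemma hwt_sum_smul_single_le {p n : ℕ} (σ₀ : Finset (Fin n)) (c : σ₀ →₀ ZMod p) :
    hwt (∑ i : σ₀, c i • (Pi.single (i : Fin n) (1 : ZMod p) : Fin n → ZMod p))
      ≤ c.support.card := by
  have hsupp : (univ.filter fun j =>
      (∑ i : σ₀, c i • (Pi.single (i : Fin n) (1 : ZMod p) : Fin n → ZMod p)) j ≠ 0)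
      ⊆ c.support.image Subtype.val := by
    intro j hj
    by_contra hj'
    simp only [mem_filter, mem_univ, true_and, Finset.sum_apply, Pi.smul_apply,
      Pi.single_apply, smul_eq_mul, mul_ite, mul_one, mul_zero] at hj
    refine hj (sum_eq_zero fun i _ => ?_)
    split_ifs with hij
    · subst hij
      by_contra hi
      exact hj' (mem_image_of_mem _ (Finsupp.mem_support_iff.mpr hi))
    · rfl
  exact (card_le_card hsupp).trans card_image_le

lemma Submodule.Quotient.mk_sum_repr_smul {R M ι : Type*} [Ring R] [AddCommGroup M]
    [Module R M] [Fintype ι] {N : Submodule R M} (B : Module.Basis ι R (M ⧸ N)) (v : ι → M)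
    (hB : ∀ i, B i = Submodule.Quotient.mk (v i)) (x : M ⧸ N) :
    Submodule.Quotient.mk (∑ i, B.repr x i • v i) = x := by
  conv_rhs => rw [← B.sum_repr x]
  simp only [hB, ← Submodule.mkQ_apply, map_sum, map_smul]

/-- Lifting the coordinates of `a + H_X` along the standard basis vectors gives a
representative of the coset whose support lies in `σ₀`. -/
lemma exists_mk_eq_hwt_le {p n : ℕ} {HX : Submodule (ZMod p) (Fin n → ZMod p)}
    {σ₀ : Finset (Fin n)} (B : Module.Basis σ₀ (ZMod p) ((Fin n → ZMod p) ⧸ HX))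
    (hB : ∀ i : σ₀, B i = Submodule.Quotient.mk (Pi.single (i : Fin n) (1 : ZMod p)))
    (a : Fin n → ZMod p) :
    ∃ a' : Fin n → ZMod p, Submodule.Quotient.mk (p := HX) a' = Submodule.Quotient.mk a ∧
      hwt a' ≤ (B.repr (Submodule.Quotient.mk a)).support.card :=
  ⟨_, Submodule.Quotient.mk_sum_repr_smul B _ hB _, hwt_sum_smul_single_le σ₀ _⟩

theorem stmt17_general (p n : ℕ)
    (HX : Submodule (ZMod p) (Fin n → ZMod p))
    (σ₀ : Finset (Fin n))
    (B : Module.Basis σ₀ (ZMod p) ((Fin n → ZMod p) ⧸ HX))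
    (hB : ∀ i : σ₀, B i = Submodule.Quotient.mk (Pi.single (i : Fin n) (1 : ZMod p))) :
    (∀ a : Fin n → ZMod p,
      sInf {w | ∃ h ∈ HX, hwt (a + h) = w}
        ≤ (B.repr (Submodule.Quotient.mk a)).support.card) ∧
    (∀ HZ : Submodule (ZMod p) (Fin n → ZMod p),
      HX ≠ HX ⊔ ortho (dotB p n) HZ →
      sInf {w | ∃ a, a ∈ HX ⊔ ortho (dotB p n) HZ ∧ a ∉ HX ∧ hwt a = w}
        ≤ sInf {w | ∃ a, a ∈ HX ⊔ ortho (dotB p n) HZ ∧ a ∉ HX ∧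
            (B.repr (Submodule.Quotient.mk a)).support.card = w}) := by
  refine ⟨fun a => ?_, fun HZ hne => ?_⟩
  · obtain ⟨a', ha', hle⟩ := exists_mk_eq_hwt_le B hB a
    have hmem : a' - a ∈ HX := (Submodule.Quotient.eq HX).mp ha'
    exact (Nat.sInf_le (Set.mem_ofPred.mpr ⟨a' - a, hmem, by rw [add_sub_cancel]⟩)).trans hle
  · set K := HX ⊔ ortho (dotB p n) HZ
    obtain ⟨a₀, ha₀K, ha₀X⟩ := SetLike.exists_of_lt (lt_of_le_of_ne le_sup_left hne)
    refine le_csInf ⟨_, a₀, ha₀K, ha₀X, rfl⟩ ?_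
    rintro _ ⟨a, haK, haX, rfl⟩
    obtain ⟨a', ha', hle⟩ := exists_mk_eq_hwt_le B hB a
    have hmem : a' - a ∈ HX := (Submodule.Quotient.eq HX).mp ha'
    have ha'K : a' ∈ K := by
      simpa using K.add_mem haK (le_sup_left (a := HX) hmem)
    have ha'X : a' ∉ HX := fun h => haX (by simpa using HX.sub_mem h hmem)
    exact (Nat.sInf_le (Set.mem_ofPred.mpr ⟨a', ha'K, ha'X, rfl⟩)).trans hle

/-- let `σ₀ ⊆ Fin n` be such that the cosets of the standard basis vectors
`e_i + H_X` (`i ∈ σ₀`) form a basis `B` of `G/H_X`, and let `wt_{σ₀}(a + H_X)` be the number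
of nonzero coefficients of `a + H_X` in this basis. Then: (i) for every `a`,
`min {wt(a + h) | h ∈ H_X} ≤ wt_{σ₀}(a + H_X)`; (ii) for every `H_Z` with
`H_X ≠ H_X + H_Z^θ`, the minimum weight over `(H_X + H_Z^θ) \ H_X` is at most the minimum
of `wt_{σ₀}` over the nonzero cosets of `(H_X + H_Z^θ)/H_X`. -/
theorem stmt17 (p n : ℕ) [Fact p.Prime]
    (HX : Submodule (ZMod p) (Fin n → ZMod p))
    (σ₀ : Finset (Fin n))
    (B : Module.Basis σ₀ (ZMod p) ((Fin n → ZMod p) ⧸ HX))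
    (hB : ∀ i : σ₀, B i = Submodule.Quotient.mk (Pi.single (i : Fin n) (1 : ZMod p))) :
    (∀ a : Fin n → ZMod p,
      sInf {w | ∃ h ∈ HX, hwt (a + h) = w}
        ≤ (B.repr (Submodule.Quotient.mk a)).support.card) ∧
    (∀ HZ : Submodule (ZMod p) (Fin n → ZMod p),
      HX ≠ HX ⊔ ortho (dotB p n) HZ →
      sInf {w | ∃ a, a ∈ HX ⊔ ortho (dotB p n) HZ ∧ a ∉ HX ∧ hwt a = w}
        ≤ sInf {w | ∃ a, a ∈ HX ⊔ ortho (dotB p n) HZ ∧ a ∉ HX ∧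
            (B.repr (Submodule.Quotient.mk a)).support.card = w}) :=
  stmt17_general p n HX σ₀ B hB
end

section
/- Let H_X ≤ G be a subspace. Say H_X respects weight if there exists σ₀ ⊆ Fin n such that the cosets {e_i + H_X | i ∈ σ₀} of the standard basis vectors form a basis of G/H_X and, for every a ∈ G, min{wt(a + h) | h ∈ H_X} equals the number of nonzero coefficients of a + H_X in that basis. Then H_X respects weight if and only if H_X admits a basis all of whose elements have Hamming weight at most 2. -/
/-!
Write `q i` for the coset of `e i` in `G ⧸ H`. For a basis `(q k)_{k ∈ σ₀}` of `G ⧸ H`, the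
coset weight `min_h wt (a + h)` equals the basis weight of `a + H` for all `a` exactly when every
`q j` has basis weight at most one: one inequality lifts the basis expansion to a vector with that
many nonzero entries, the other expands `a + h` as `∑ (a + h)_j q j`.

If every `q j` has basis weight at most one, then `e j - c e_k ∈ H` for some `k ∈ σ₀`, and for
`j ∉ σ₀` these `n - |σ₀| = dim H` vectors of weight at most two are independent (they restrict to
`e j` off `σ₀`), hence a basis of `H`.

Conversely, if `H` is spanned by vectors of weight at most two, a generator with nonzero entries
at `i` and `j` forces `q i` and `q j` to be proportional, so restricting a vector of `H` to a
proportionality class keeps it in `H`. Choosing one index from each class with `q i ≠ 0` therefore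
gives a basis of `G ⧸ H` in which every `q j` has basis weight at most one.
-/

open Finset

theorem Finsupp.hammingNorm_coe {ι M : Type*} [Fintype ι] [Zero M] [DecidableEq M]
    (f : ι →₀ M) : hammingNorm ⇑f = #f.support :=
  congrArg card (by ext; simp)

theorem hammingNorm_single_le_one {ι β : Type*} [Fintype ι] [DecidableEq ι] [Zero β]
    [DecidableEq β] (i : ι) (b : β) : hammingNorm (Pi.single i b : ι → β) ≤ 1 :=
  (card_le_card (t := {i}) fun k hk => by by_contra hki; simp_all).trans_eq (card_singleton i)

theorem hammingNorm_sub_le {ι β : Type*} [Fintype ι] [AddCommGroup β] [DecidableEq β]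
    (x y : ι → β) : hammingNorm (x - y) ≤ hammingNorm x + hammingNorm y :=
  calc hammingNorm (x - y) = hammingDist y x := by rw [hammingDist_eq_hammingNorm, neg_add_eq_sub]
    _ ≤ hammingDist y 0 + hammingDist 0 x := hammingDist_triangle y 0 x
    _ = hammingNorm x + hammingNorm y := by
      rw [hammingDist_zero_right, hammingDist_zero_left, add_comm]

theorem LinearIndependent.of_comp_eq_single {R κ ι : Type*} [Semiring R] [DecidableEq κ]
    {d : κ → ι → R} (e : κ → ι) (hd : ∀ i, d i ∘ e = Pi.single i 1) : LinearIndependent R d :=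
  .of_comp (LinearMap.funLeft R R e) (by convert Pi.linearIndependent_single_one κ R; exact hd _)

noncomputable def Set.indicatorLinearMap (R : Type*) {α : Type*} [Semiring R] (S : Set α) :
    (α → R) →ₗ[R] α → R where
  toFun := S.indicator
  map_add' := S.indicator_add'
  map_smul' c f := S.indicator_const_smul c f

namespace Submodule

variable {K ι : Type*} [Field K] [DecidableEq ι] (H : Submodule K (ι → K))

abbrev stdCoset (i : ι) : (ι → K) ⧸ H := Submodule.Quotient.mk (Pi.single i 1)

section Fintype

variable [Fintype ι]

theorem mk_eq_sum_smul_stdCoset (v : ι → K) :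
    (Submodule.Quotient.mk v : (ι → K) ⧸ H) = ∑ j, v j • H.stdCoset j := by
  conv_lhs => rw [← (Pi.basisFun K ι).sum_repr v]
  rw [← H.mkQ_apply, map_sum]
  simp

theorem mk_finsupp_eq_linearCombination (f : ι →₀ K) :
    (Submodule.Quotient.mk ⇑f : (ι → K) ⧸ H) = Finsupp.linearCombination K H.stdCoset f := by
  rw [mk_eq_sum_smul_stdCoset, Finsupp.linearCombination_apply, Finsupp.sum_fintype _ _ (by simp)]

theorem finrank_eq_card_compl {σ : Finset ι} (B : Module.Basis σ K ((ι → K) ⧸ H)) :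
    Module.finrank K H = #σᶜ := by
  have := H.finrank_quotient_add_finrank
  rw [Module.finrank_eq_card_basis B, Module.finrank_fintype_fun_eq_card, Fintype.card_coe] at this
  rw [card_compl]
  omega

section

variable [DecidableEq K] {σ : Finset ι}

theorem mk_eq_sum_filter_smul_stdCoset (v : ι → K) :
    (Submodule.Quotient.mk v : (ι → K) ⧸ H) = ∑ j ∈ univ.filter (v · ≠ 0), v j • H.stdCoset j := by
  rw [sum_filter_of_ne fun j _ h => left_ne_zero_of_smul h, mk_eq_sum_smul_stdCoset]

theorem exists_mk_eq_hammingNorm_eq_card_support (B : Module.Basis σ K ((ι → K) ⧸ H))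
    (hB : ∀ k, B k = H.stdCoset k) (x : (ι → K) ⧸ H) :
    ∃ f : ι → K, Submodule.Quotient.mk f = x ∧ hammingNorm f = #(B.repr x).support ∧
      ∀ i ∉ σ, f i = 0 := by
  let e := Function.Embedding.subtype (· ∈ σ)
  refine ⟨Finsupp.embDomain e (B.repr x), ?_, ?_, fun i hi => ?_⟩
  · rw [mk_finsupp_eq_linearCombination, Finsupp.linearCombination_embDomain]
    convert B.linearCombination_repr x
    exact funext fun k => (hB k).symm
  · rw [Finsupp.hammingNorm_coe, Finsupp.support_embDomain, card_map]
  · exact Finsupp.embDomain_of_notMem_range _ _ _ (by simpa [e] using hi)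

theorem sInf_hammingNorm_le_card_support_repr (B : Module.Basis σ K ((ι → K) ⧸ H))
    (hB : ∀ k, B k = H.stdCoset k) (a : ι → K) :
    sInf {w | ∃ h ∈ H, hammingNorm (a + h) = w} ≤ #(B.repr (Submodule.Quotient.mk a)).support := by
  obtain ⟨f, hf, hfw, -⟩ :=
    H.exists_mk_eq_hammingNorm_eq_card_support B hB (Submodule.Quotient.mk a)
  exact Nat.sInf_le ⟨f - a, (Submodule.Quotient.eq H).1 hf, by rw [add_sub_cancel, hfw]⟩

theorem card_support_repr_le_hammingNorm {κ : Type*} (B : Module.Basis κ K ((ι → K) ⧸ H))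
    (h1 : ∀ j, #(B.repr (H.stdCoset j)).support ≤ 1) (y : ι → K) :
    #(B.repr (Submodule.Quotient.mk y)).support ≤ hammingNorm y := by
  classical
  let S := univ.filter (y · ≠ 0)
  rw [mk_eq_sum_filter_smul_stdCoset, map_sum]
  calc _ ≤ #(S.biUnion fun j => (B.repr (y j • H.stdCoset j)).support) :=
        card_le_card Finsupp.support_finsetSum
    _ ≤ ∑ j ∈ S, #(B.repr (y j • H.stdCoset j)).support := card_biUnion_le
    _ ≤ ∑ j ∈ S, 1 := sum_le_sum fun j _ => by
        rw [map_smul]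
        exact (card_le_card Finsupp.support_smul).trans (h1 j)
    _ = hammingNorm y := by simp [S, hammingNorm]

theorem sInf_hammingNorm_eq_card_support_repr_iff (B : Module.Basis σ K ((ι → K) ⧸ H))
    (hB : ∀ k, B k = H.stdCoset k) :
    (∀ a : ι → K, sInf {w | ∃ h ∈ H, hammingNorm (a + h) = w} =
        #(B.repr (Submodule.Quotient.mk a)).support) ↔
      ∀ j, #(B.repr (H.stdCoset j)).support ≤ 1 := by
  refine ⟨fun h j => ?_, fun h a => (H.sInf_hammingNorm_le_card_support_repr B hB a).antisymm ?_⟩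
  · rw [← h (Pi.single j 1)]
    refine (Nat.sInf_le ?_).trans (hammingNorm_single_le_one j (1 : K))
    exact ⟨0, H.zero_mem, by rw [add_zero]⟩
  · refine le_csInf ⟨_, 0, H.zero_mem, rfl⟩ ?_
    rintro w ⟨h', hh', rfl⟩
    have hmk : (Submodule.Quotient.mk (a + h') : (ι → K) ⧸ H) = Submodule.Quotient.mk a := by
      rw [Submodule.Quotient.mk_add, (Submodule.Quotient.mk_eq_zero H).2 hh', add_zero]
    exact hmk ▸ H.card_support_repr_le_hammingNorm B h (a + h')

theorem exists_linearIndependent_hammingNorm_le_two (B : Module.Basis σ K ((ι → K) ⧸ H))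
    (hB : ∀ k, B k = H.stdCoset k) (h1 : ∀ j, #(B.repr (H.stdCoset j)).support ≤ 1) :
    ∃ s : Set (ι → K), span K s = H ∧ LinearIndependent K ((↑) : s → ι → K) ∧
      ∀ a ∈ s, hammingNorm a ≤ 2 := by
  have hlift (j : ι) : ∃ v ∈ H, hammingNorm v ≤ 2 ∧ ∀ i ∉ σ, v i = (Pi.single j 1 : ι → K) i := by
    obtain ⟨f, hf, hfw, hfσ⟩ := H.exists_mk_eq_hammingNorm_eq_card_support B hB (H.stdCoset j)
    refine ⟨Pi.single j 1 - f, (Submodule.Quotient.eq H).1 hf.symm, ?_, fun i hi => ?_⟩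
    · exact (hammingNorm_sub_le _ _).trans (add_le_add (hammingNorm_single_le_one j 1) (hfw ▸ h1 j))
    · simp [hfσ i hi]
  choose d hdH hd2 hdσ using hlift
  let d' : ↥σᶜ → ι → K := fun j => d j
  have hind : LinearIndependent K d' := .of_comp_eq_single Subtype.val fun j => funext fun k => by
    simp only [d', Function.comp_apply, hdσ j k (mem_compl.1 k.2), Pi.single_apply, Subtype.ext_iff]
  have hspan : span K (Set.range d') = H := by
    refine eq_of_le_of_finrank_eq (span_le.2 (Set.range_subset_iff.2 fun j => hdH j)) ?_
    rw [finrank_span_eq_card hind, H.finrank_eq_card_compl B, Fintype.card_coe]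
  exact ⟨Set.range d', hspan, (linearIndepOn_id_range_iff hind.injective).2 hind,
    Set.forall_mem_range.2 fun j => hd2 j⟩

end

end Fintype

def cosetRel : Setoid ι := Setoid.comap H.stdCoset (MulAction.orbitRel Kˣ ((ι → K) ⧸ H))

variable {H} in
theorem cosetRel_of_smul_eq {i j : ι} {c : K} (hc : c ≠ 0) (h : c • H.stdCoset j = H.stdCoset i) :
    H.cosetRel i j :=
  ⟨Units.mk0 c hc, h⟩

noncomputable def cosetRep (i : ι) : ι := (_root_.Quotient.mk H.cosetRel i).out

theorem cosetRel_cosetRep (i : ι) : H.cosetRel (H.cosetRep i) i := _root_.Quotient.mk_out i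

theorem cosetRep_eq_of_cosetRel {i j : ι} (h : H.cosetRel i j) : H.cosetRep i = H.cosetRep j :=
  congrArg _root_.Quotient.out (_root_.Quotient.sound h)

theorem exists_stdCoset_eq_smul_stdCoset_cosetRep (i : ι) :
    ∃ c : K, c ≠ 0 ∧ H.stdCoset i = c • H.stdCoset (H.cosetRep i) := by
  obtain ⟨c, hc⟩ := H.cosetRel_cosetRep i
  exact ⟨(c⁻¹ : Kˣ), Units.ne_zero _, by rw [← Units.smul_def, ← hc, inv_smul_smul]⟩

variable [Fintype ι]

open Classical in
noncomputable def repIndices : Finset ι :=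
  univ.filter fun i => H.stdCoset i ≠ 0 ∧ H.cosetRep i = i

theorem mem_repIndices {i : ι} : i ∈ H.repIndices ↔ H.stdCoset i ≠ 0 ∧ H.cosetRep i = i := by
  simp [repIndices]

theorem cosetRep_mem_repIndices {i : ι} (hi : H.stdCoset i ≠ 0) : H.cosetRep i ∈ H.repIndices := by
  obtain ⟨c, -, hc⟩ := H.exists_stdCoset_eq_smul_stdCoset_cosetRep i
  refine H.mem_repIndices.2 ⟨fun h => hi (by rw [hc, h, smul_zero]), ?_⟩
  exact H.cosetRep_eq_of_cosetRel (H.cosetRel_cosetRep i)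

theorem eq_of_cosetRel_of_mem_repIndices {k k' : ι} (hk : k ∈ H.repIndices)
    (hk' : k' ∈ H.repIndices) (h : H.cosetRel k k') : k = k' := by
  rw [← (H.mem_repIndices.1 hk).2, ← (H.mem_repIndices.1 hk').2, H.cosetRep_eq_of_cosetRel h]

theorem top_le_span_stdCoset_repIndices :
    ⊤ ≤ span K (Set.range fun k : H.repIndices => H.stdCoset k) := by
  rintro x -
  obtain ⟨v, rfl⟩ := Submodule.Quotient.mk_surjective H x
  rw [mk_eq_sum_smul_stdCoset]
  refine sum_mem fun j _ => smul_mem _ _ ?_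
  by_cases hj : H.stdCoset j = 0
  · rw [hj]
    exact zero_mem _
  obtain ⟨c, -, hc⟩ := H.exists_stdCoset_eq_smul_stdCoset_cosetRep j
  rw [hc]
  exact smul_mem _ _ (subset_span ⟨⟨_, H.cosetRep_mem_repIndices hj⟩, rfl⟩)

theorem card_support_repr_stdCoset_le_one (B : Module.Basis H.repIndices K ((ι → K) ⧸ H))
    (hB : ∀ k, B k = H.stdCoset k) (j : ι) : #(B.repr (H.stdCoset j)).support ≤ 1 := by
  by_cases hj : H.stdCoset j = 0
  · simp [hj]
  obtain ⟨c, -, hc⟩ := H.exists_stdCoset_eq_smul_stdCoset_cosetRep j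
  have hrep := H.cosetRep_mem_repIndices hj
  rw [hc, ← (hB ⟨_, hrep⟩ : B _ = H.stdCoset (H.cosetRep j)), map_smul, B.repr_self,
    Finsupp.smul_single_one]
  exact (card_le_card Finsupp.support_single_subset).trans_eq (card_singleton _)

section

variable [DecidableEq K]

theorem cosetRel_of_mem {u : ι → K} (hu : u ∈ H) (h2 : hammingNorm u ≤ 2) {i j : ι}
    (hi : u i ≠ 0) (hj : u j ≠ 0) : H.cosetRel i j := by
  rcases eq_or_ne i j with rfl | hij
  · exact H.cosetRel.refl i
  have hsupp : ({i, j} : Finset ι) = univ.filter (u · ≠ 0) :=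
    eq_of_subset_of_card_le (by simp [insert_subset_iff, hi, hj]) (h2.trans_eq (card_pair hij).symm)
  have h0 : u i • H.stdCoset i + u j • H.stdCoset j = 0 := by
    rw [← sum_pair (f := fun k => u k • H.stdCoset k) hij, hsupp,
      ← mk_eq_sum_filter_smul_stdCoset, Submodule.Quotient.mk_eq_zero]
    exact hu
  refine cosetRel_of_smul_eq (c := -(u i)⁻¹ * u j)
    (mul_ne_zero (neg_ne_zero.2 (inv_ne_zero hi)) hj) ?_
  rw [mul_smul, eq_neg_of_add_eq_zero_right h0, smul_neg, neg_smul, neg_neg, smul_smul,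
    inv_mul_cancel₀ hi, one_smul]

theorem le_comap_indicatorLinearMap_cosetRel {s : Set (ι → K)} (hs : span K s = H)
    (h2 : ∀ u ∈ s, hammingNorm u ≤ 2) (k : ι) :
    H ≤ H.comap (Set.indicatorLinearMap K {j | H.cosetRel j k}) := by
  suffices s ⊆ H.comap (Set.indicatorLinearMap K {j | H.cosetRel j k}) by
    rwa [← span_le, hs] at this
  intro u hu
  have huH : u ∈ H := hs ▸ subset_span hu
  show {j | H.cosetRel j k}.indicator u ∈ H
  by_cases h : ∃ j, u j ≠ 0 ∧ H.cosetRel j k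
  · obtain ⟨j, hj, hjk⟩ := h
    have hsub : Function.support u ⊆ {j | H.cosetRel j k} := fun i hi =>
      H.cosetRel.trans (H.cosetRel_of_mem huH (h2 u hu) hi hj) hjk
    rwa [Set.indicator_eq_self.2 hsub]
  · have hdisj : Disjoint (Function.support u) {j | H.cosetRel j k} :=
      Set.disjoint_left.2 fun j hj hjk => h ⟨j, hj, hjk⟩
    rw [Set.indicator_eq_zero'.2 hdisj]
    exact H.zero_mem

theorem linearIndependent_stdCoset_repIndices {s : Set (ι → K)} (hs : span K s = H)
    (h2 : ∀ u ∈ s, hammingNorm u ≤ 2) :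
    LinearIndependent K fun k : H.repIndices => H.stdCoset k := by
  rw [Fintype.linearIndependent_iff]
  intro g hg k₀
  let P := H.mapQ H _ (H.le_comap_indicatorLinearMap_cosetRel hs h2 k₀)
  have hP (k : H.repIndices) : P (H.stdCoset k) = if k = k₀ then H.stdCoset k else 0 := by
    rw [mapQ_apply]
    split_ifs with hk
    · subst hk
      congr 1
      exact Set.indicator_eq_self.2
        (Pi.support_single_subset.trans (Set.singleton_subset_iff.2 (H.cosetRel.refl _)))
    · have hdisj : Disjoint (Function.support (Pi.single (k : ι) (1 : K))) {j | H.cosetRel j k₀} :=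
        Set.disjoint_left.2 fun j hj hjk => hk <| Subtype.ext <|
          H.eq_of_cosetRel_of_mem_repIndices k.2 k₀.2
            (Set.mem_singleton_iff.1 (Pi.support_single_subset hj) ▸ hjk)
      exact (congrArg _ (Set.indicator_eq_zero'.2 hdisj)).trans (Submodule.Quotient.mk_zero H)
  have := congrArg P hg
  simp only [map_sum, map_smul, hP, smul_ite, smul_zero, sum_ite_eq', mem_univ, if_true,
    map_zero] at this
  exact (smul_eq_zero.1 this).resolve_right (H.mem_repIndices.1 k₀.2).1

theorem exists_basis_stdCoset_card_support_repr_le_one {s : Set (ι → K)} (hs : span K s = H)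
    (h2 : ∀ u ∈ s, hammingNorm u ≤ 2) :
    ∃ (σ : Finset ι) (B : Module.Basis σ K ((ι → K) ⧸ H)), (∀ k, B k = H.stdCoset k) ∧
      ∀ j, #(B.repr (H.stdCoset j)).support ≤ 1 := by
  let B := Module.Basis.mk (H.linearIndependent_stdCoset_repIndices hs h2)
    H.top_le_span_stdCoset_repIndices
  have hB : ∀ k, B k = H.stdCoset k := Module.Basis.mk_apply _ _
  exact ⟨H.repIndices, B, hB, H.card_support_repr_stdCoset_le_one B hB⟩

end

end Submodule

/-- a subspace `H_X ≤ G` respects weight — i.e., there is `σ₀ ⊆ Fin n` whose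
standard-basis-vector cosets form a basis of `G/H_X` in which the number of nonzero
coefficients of every coset `a + H_X` equals `min {wt(a + h) | h ∈ H_X}` — iff `H_X` admits
a basis all of whose elements have Hamming weight at most `2`. -/
theorem stmt18 (p n : ℕ) [Fact p.Prime]
    (HX : Submodule (ZMod p) (Fin n → ZMod p)) :
    (∃ (σ₀ : Finset (Fin n)) (B : Module.Basis σ₀ (ZMod p) ((Fin n → ZMod p) ⧸ HX)),
      (∀ i : σ₀, B i = Submodule.Quotient.mk (Pi.single (i : Fin n) (1 : ZMod p))) ∧
      ∀ a : Fin n → ZMod p,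
        sInf {w | ∃ h ∈ HX, hwt (a + h) = w}
          = (B.repr (Submodule.Quotient.mk a)).support.card)
    ↔ (∃ s : Set (Fin n → ZMod p),
        Submodule.span (ZMod p) s = HX ∧
        LinearIndependent (ZMod p) ((↑) : s → (Fin n → ZMod p)) ∧
        ∀ a ∈ s, hwt a ≤ 2) := by
  constructor
  · rintro ⟨σ₀, B, hB, hw⟩
    exact HX.exists_linearIndependent_hammingNorm_le_two B hB
      ((HX.sInf_hammingNorm_eq_card_support_repr_iff B hB).1 hw)
  · rintro ⟨s, hs, -, h2⟩
    obtain ⟨σ₀, B, hB, h1⟩ := HX.exists_basis_stdCoset_card_support_repr_le_one hs h2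
    exact ⟨σ₀, B, hB, (HX.sInf_hammingNorm_eq_card_support_repr_iff B hB).2 h1⟩
end
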